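/- Let 0 < H ≤ 1 and let x be a nonzero real number. Then Γ(H)² / |Γ(H + ix)|² ≥ sinh(πx)/(πx), where Γ denotes the Gamma function extended to the complex plane and |Γ(H + ix)| is the modulus of its value at H + ix. -/

import Mathlib

/-!
By Euler's limit formula, `|Γ(a + it)| / Γ(a) = ∏_{j ≥ 0} (a + j) / |a + j + it|` for `a > 0`, and
each factor increases with `a`. Hence `|Γ(H + ix)| ≤ Γ(H) |Γ(1 + ix)|` for `0 < H ≤ 1`, and the
reflection formula `Γ(z) Γ(1 - z) = π / sin(πz)` at `z = ix` gives `|Γ(1 + ix)|² = πx / sinh(πx)`.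
-/

open Real Finset Filter Topology
open scoped Nat

lemma mul_norm_ofReal_add_mul_I_le (t : ℝ) {u v : ℝ} (hu : 0 ≤ u) (huv : u ≤ v) :
    u * ‖(v : ℂ) + t * Complex.I‖ ≤ v * ‖(u : ℂ) + t * Complex.I‖ := by
  have hv : 0 ≤ v := hu.trans huv
  refine (pow_le_pow_iff_left₀ (by positivity) (by positivity) two_ne_zero).mp ?_
  simp only [mul_pow, Complex.sq_norm, Complex.normSq_add_mul_I]
  nlinarith [mul_le_mul huv huv hu hv, sq_nonneg t]

lemma Complex.norm_GammaSeq (z : ℂ) {n : ℕ} (hn : n ≠ 0) :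
    ‖Complex.GammaSeq z n‖ = (n : ℝ) ^ z.re * n ! / ∏ j ∈ range (n + 1), ‖z + j‖ := by
  rw [Complex.GammaSeq, norm_div, norm_mul, norm_prod, Complex.norm_natCast,
    ← Complex.ofReal_natCast, Complex.norm_cpow_eq_rpow_re_of_pos (by positivity)]

lemma Complex.norm_GammaSeq_add_mul_I_mul_le (t : ℝ) {a b : ℝ} (ha : 0 < a) (hab : a ≤ b)
    {n : ℕ} (hn : n ≠ 0) :
    ‖Complex.GammaSeq (a + t * Complex.I) n‖ * ‖Complex.GammaSeq b n‖
      ≤ ‖Complex.GammaSeq a n‖ * ‖Complex.GammaSeq (b + t * Complex.I) n‖ := by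
  have shift (c : ℝ) (j : ℕ) : (c : ℂ) + t * Complex.I + j = ((c + j : ℝ) : ℂ) + t * Complex.I := by
    push_cast; ring
  have norm_shift (c : ℝ) (hc : 0 ≤ c) (j : ℕ) : ‖(c : ℂ) + j‖ = c + j := by
    rw [← Complex.ofReal_natCast, ← Complex.ofReal_add, Complex.norm_of_nonneg (by positivity)]
  simp only [Complex.norm_GammaSeq _ hn, shift, norm_shift a ha.le, norm_shift b (ha.le.trans hab),
    Complex.add_re, Complex.ofReal_re, Complex.re_ofReal_mul, Complex.I_re, mul_zero, add_zero]
  rw [div_mul_div_comm, div_mul_div_comm]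
  have norm_pos (j : ℕ) : 0 < ‖((b + j : ℝ) : ℂ) + t * Complex.I‖ :=
    norm_pos_iff.mpr (Complex.ne_zero_of_re_pos (by simp; linarith [j.cast_nonneg (α := ℝ)]))
  -- the numerators agree, so it remains to compare the denominators factor by factor
  refine div_le_div_of_nonneg_left (by positivity)
    (mul_pos (by positivity) (prod_pos fun j _ => norm_pos j)) ?_
  simp only [← prod_mul_distrib]
  refine prod_le_prod (fun j _ => by positivity) fun j _ => ?_
  rw [mul_comm ‖_‖]
  exact mul_norm_ofReal_add_mul_I_le t (by positivity) (by linarith)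

lemma Complex.norm_Gamma_add_mul_I_mul_le (t : ℝ) {a b : ℝ} (ha : 0 < a) (hab : a ≤ b) :
    ‖Complex.Gamma (a + t * Complex.I)‖ * Real.Gamma b
      ≤ Real.Gamma a * ‖Complex.Gamma (b + t * Complex.I)‖ := by
  have norm_Gamma_ofReal {c : ℝ} (hc : 0 < c) : ‖Complex.Gamma c‖ = Real.Gamma c := by
    rw [Complex.Gamma_ofReal, Complex.norm_real, norm_of_nonneg (Real.Gamma_pos_of_pos hc).le]
  have lim (z : ℂ) : Tendsto (fun n => ‖Complex.GammaSeq z n‖) atTop (𝓝 ‖Complex.Gamma z‖) :=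
    (Complex.GammaSeq_tendsto_Gamma z).norm
  rw [← norm_Gamma_ofReal ha, ← norm_Gamma_ofReal (ha.trans_le hab)]
  refine le_of_tendsto_of_tendsto ((lim _).mul (lim _)) ((lim _).mul (lim _)) ?_
  filter_upwards [eventually_ne_atTop 0] with n hn
  exact Complex.norm_GammaSeq_add_mul_I_mul_le t ha hab hn

lemma Complex.norm_Gamma_one_add_mul_I_sq {t : ℝ} (ht : t ≠ 0) :
    ‖Complex.Gamma (1 + t * Complex.I)‖ ^ 2 = π * t / Real.sinh (π * t) := by
  have htI : (t : ℂ) * Complex.I ≠ 0 := mul_ne_zero (by exact_mod_cast ht) Complex.I_ne_zero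
  have hsinh : (Real.sinh (π * t) : ℂ) ≠ 0 := by
    exact_mod_cast Real.sinh_ne_zero.mpr (mul_ne_zero pi_ne_zero ht)
  have hconj : (starRingEnd ℂ) (1 + t * Complex.I) = 1 - t * Complex.I := by
    simp [Complex.conj_ofReal, sub_eq_add_neg]
  have hsin : Complex.sin (π * (t * Complex.I)) = Real.sinh (π * t) * Complex.I := by
    rw [← mul_assoc, ← Complex.ofReal_mul, Complex.sin_mul_I, Complex.ofReal_sinh]
  apply Complex.ofReal_injective
  rw [Complex.ofReal_pow, ← Complex.mul_conj', ← Complex.Gamma_conj, hconj, add_comm,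
    Complex.Gamma_add_one _ htI, mul_assoc, Complex.Gamma_mul_Gamma_one_sub, hsin]
  push_cast
  field_simp

theorem gamma_modulus_ratio_ge (H : ℝ) (hH₀ : 0 < H) (hH₁ : H ≤ 1)
    (x : ℝ) (hx : x ≠ 0) :
    Real.Gamma H ^ 2 / ‖Complex.Gamma ((H : ℂ) + x * Complex.I)‖ ^ 2
      ≥ Real.sinh (π * x) / (π * x) := by
  have norm_Gamma_pos {z : ℂ} (hz : 0 < z.re) : 0 < ‖Complex.Gamma z‖ :=
    norm_pos_iff.mpr (Complex.Gamma_ne_zero_of_re_pos hz)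
  have hA := norm_Gamma_pos (z := H + x * Complex.I) (by simpa)
  have hB := pow_pos (norm_Gamma_pos (z := 1 + x * Complex.I) (by simp)) 2
  have key := Complex.norm_Gamma_add_mul_I_mul_le x hH₀ hH₁
  rw [Complex.ofReal_one, Real.Gamma_one, mul_one] at key
  have key_sq := pow_le_pow_left₀ hA.le key 2
  rw [mul_pow, Complex.norm_Gamma_one_add_mul_I_sq hx] at key_sq
  rw [Complex.norm_Gamma_one_add_mul_I_sq hx] at hB
  rw [ge_iff_le, ← inv_div, inv_eq_one_div, div_le_div_iff₀ hB (by positivity)]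
  linarith
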